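/- Serial dictatorship produces an ex-post Pareto efficient outcome when each agent, in turn, is allocated for each good the minimal fraction achieving her full value: for nondecreasing f_{ik}, if agent i receives z_{ik} = min{z : f_{ik}(z) = f_{ik}(r_k)} of the remaining amount r_k of each good k, then no alternative feasible allocation gives every agent at least as much utility and some agent strictly more. -/
import Mathlib


/-- Serial dictatorship with minimal full-value bundles is ex-post Pareto
efficient (two agents, one good): agent 1 gets
`z = min {w ∈ [0,1] : f₁ w = f₁ 1}` and agent 2 gets `1 - z`; no feasible
allocation weakly improves both agents and strictly improves one, assuming
`f₁` is nondecreasing and continuous on `[0,1]` and `f₂` strictly increasing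
on `[0,1]`. -/
theorem serial_dictatorship_pareto_efficient
    (f₁ f₂ : ℝ → ℝ)
    (h₁mono : MonotoneOn f₁ (Set.Icc (0:ℝ) 1))
    (h₁cont : ContinuousOn f₁ (Set.Icc (0:ℝ) 1))
    (h₂ : StrictMonoOn f₂ (Set.Icc (0:ℝ) 1)) :
    let z := sInf {w : ℝ | w ∈ Set.Icc (0:ℝ) 1 ∧ f₁ w = f₁ 1}
    z ∈ Set.Icc (0:ℝ) 1 ∧ f₁ z = f₁ 1 ∧
      ¬ ∃ y₁ ∈ Set.Icc (0:ℝ) 1, ∃ y₂ ∈ Set.Icc (0:ℝ) 1, y₁ + y₂ ≤ 1 ∧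
        f₁ y₁ ≥ f₁ z ∧ f₂ y₂ ≥ f₂ (1 - z) ∧
        (f₁ y₁ > f₁ z ∨ f₂ y₂ > f₂ (1 - z)) := by
  intro z
  set S : Set ℝ := {w : ℝ | w ∈ Set.Icc (0:ℝ) 1 ∧ f₁ w = f₁ 1} with hS
  have hSeq : S = Set.Icc (0:ℝ) 1 ∩ f₁ ⁻¹' {f₁ 1} := by
    ext w; simp [hS, Set.mem_preimage]
  have hclosed : IsClosed S := by
    rw [hSeq]
    exact h₁cont.preimage_isClosed_of_isClosed isClosed_Icc isClosed_singleton
  have h1S : (1:ℝ) ∈ S := ⟨⟨zero_le_one, le_refl 1⟩, rfl⟩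
  have hne : S.Nonempty := ⟨1, h1S⟩
  have hbdd : BddBelow S := ⟨0, fun w hw => hw.1.1⟩
  have hzS : z ∈ S := hclosed.csInf_mem hne hbdd
  refine ⟨hzS.1, hzS.2, ?_⟩
  rintro ⟨y₁, hy₁, y₂, hy₂, hsum, hf1, hf2, hstrict⟩
  -- f₁ y₁ ≤ f₁ 1
  have hle : f₁ y₁ ≤ f₁ 1 := h₁mono hy₁ ⟨zero_le_one, le_refl 1⟩ hy₁.2
  have hf1eq : f₁ y₁ = f₁ z := le_antisymm (hzS.2 ▸ hle) hf1
  have hy₁S : y₁ ∈ S := ⟨hy₁, hf1eq.trans hzS.2⟩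
  have hy₁z : z ≤ y₁ := csInf_le hbdd hy₁S
  have hy₂le : y₂ ≤ 1 - z := by linarith
  have h1z : (1 - z) ∈ Set.Icc (0:ℝ) 1 := ⟨by linarith [hzS.1.2], by linarith [hzS.1.1]⟩
  have hf2le : f₂ y₂ ≤ f₂ (1 - z) := h₂.monotoneOn hy₂ h1z hy₂le
  have hf2eq : f₂ y₂ = f₂ (1 - z) := le_antisymm hf2le hf2
  rcases hstrict with h | h
  · exact absurd hf1eq (ne_of_gt h)
  · exact absurd hf2eq (ne_of_gt h)
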